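/- arXiv:math-ph/0604033 — 2 statements merged into one kernel-verified Lean document; each statement's English description precedes it below -/
import Mathlib

section
/- Let A be a 2×2 complex matrix such that Im A is positive definite. Then the integral over (v₁,v₂) ∈ ℝ² of det(Im[(diag(v₁,v₂) − A)⁻¹]) is at most π². -/
open MeasureTheory Matrix Real ComplexOrder

/-- The (operator) imaginary part of a complex matrix: `Im C = (C - Cᴴ)/(2i)`. -/
noncomputable def matIm {m : Type*} (C : Matrix m m ℂ) : Matrix m m ℂ :=
  (2 * Complex.I)⁻¹ • (C - Cᴴ)

/-!
With `M = diag(v) - A` one has `Im (M⁻¹) = M⁻¹ (Im A) M⁻ᴴ`, so the integrand is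
`det (Im A) / |det M|²`, where `det M = (v₁ - a)(v₂ - d) - bc` in the entries of `A`. Integrating
`|det M|⁻²` in `v₂` is a Cauchy integral and leaves `π` over a positive quadratic in `v₁`, whose
integral is `2π / √Δ` with `Δ = 4s(s + Re bc) - (Im bc)²`, `s = Im a Im d`. Finally
`det (Im A) = s - |b - c̄|² / 4`, and `(2 det (Im A))² ≤ Δ` comes down to
`|b - c̄|² |b + c̄|² ≥ 4 (Im bc)²`.
-/

open Complex (normSq)
open ComplexConjugate

theorem matIm_apply {n : Type*} (A : Matrix n n ℂ) (i j : n) :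
    matIm A i j = (A i j - conj (A j i)) / (2 * Complex.I) := by
  simp [matIm, div_eq_inv_mul]

theorem matIm_apply_self {n : Type*} (A : Matrix n n ℂ) (i : n) : matIm A i i = (A i i).im := by
  rw [matIm_apply, Complex.sub_conj]
  push_cast
  field_simp

theorem im_pos_of_posDef_matIm {n : Type*} [Fintype n] {A : Matrix n n ℂ}
    (hA : (matIm A).PosDef) (i : n) : 0 < (A i i).im := by
  simpa [matIm_apply_self] using hA.diag_pos (i := i)

theorem det_matIm_fin_two (A : Matrix (Fin 2) (Fin 2) ℂ) :
    (matIm A).det = ((A 0 0).im * (A 1 1).im - normSq (A 0 1 - conj (A 1 0)) / 4 : ℝ) := by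
  have hc : A 1 0 - conj (A 0 1) = -conj (A 0 1 - conj (A 1 0)) := by simp
  rw [det_fin_two, matIm_apply_self, matIm_apply_self, matIm_apply, matIm_apply, hc, neg_div,
    mul_neg, div_mul_div_comm, Complex.mul_conj]
  have h2I : (2 * Complex.I) * (2 * Complex.I) = -4 := by
    rw [mul_mul_mul_comm, Complex.I_mul_I]; norm_num
  rw [h2I]
  push_cast
  ring

theorem matIm_sub_of_isHermitian {n : Type*} {H : Matrix n n ℂ} (hH : H.IsHermitian)
    (A : Matrix n n ℂ) : matIm (H - A) = -matIm A := by
  rw [matIm, matIm, conjTranspose_sub, hH.eq, ← smul_neg, neg_sub, sub_sub_sub_cancel_left]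

section Inverse

variable {n : Type*} [Fintype n] [DecidableEq n]

theorem matIm_inv {M : Matrix n n ℂ} (hM : IsUnit M.det) :
    matIm M⁻¹ = -(M⁻¹ * matIm M * M⁻¹ᴴ) := by
  have hMH : IsUnit Mᴴ.det := by rw [det_conjTranspose]; exact hM.star
  rw [matIm, matIm, conjTranspose_nonsing_inv, Matrix.mul_smul, Matrix.smul_mul, ← smul_neg,
    Matrix.mul_sub, Matrix.sub_mul, mul_nonsing_inv_cancel_right _ _ hMH,
    nonsing_inv_mul _ hM, Matrix.one_mul, neg_sub]

theorem det_matIm_inv_sub_of_isHermitian [Nonempty n] {H : Matrix n n ℂ} (hH : H.IsHermitian)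
    (A : Matrix n n ℂ) :
    (matIm (H - A)⁻¹).det = (matIm A).det / normSq (H - A).det := by
  by_cases h : (H - A).det = 0
  · simp [h, nonsing_inv_apply_not_isUnit, matIm]
  rw [matIm_inv (isUnit_iff_ne_zero.2 h), matIm_sub_of_isHermitian hH, Matrix.mul_neg,
    Matrix.neg_mul, neg_neg, det_mul, det_mul, det_conjTranspose, det_nonsing_inv,
    Ring.inverse_eq_inv, star_inv₀, Complex.star_def, ← Complex.mul_conj, div_eq_mul_inv,
    mul_inv]
  ring

end Inverse

theorem integral_inv_normSq_ofReal_sub (w : ℂ) (hw : w.im ≠ 0) :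
    ∫ y : ℝ, (normSq (y - w))⁻¹ = π / |w.im| := by
  have hpdf : ∀ y : ℝ, (normSq (y - w))⁻¹
      = π / |w.im| * ProbabilityTheory.cauchyPDFReal w.re (Real.nnabs w.im) y := by
    intro y
    rw [ProbabilityTheory.cauchyPDFReal_def, Real.coe_nnabs, sq_abs]
    simp only [Complex.normSq_apply, Complex.sub_re, Complex.ofReal_re, Complex.sub_im,
      Complex.ofReal_im]
    field_simp
    ring
  simp_rw [hpdf]
  rw [integral_const_mul, ProbabilityTheory.integral_cauchyPDFReal_eq_one, mul_one]
  simpa using hw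

theorem integral_inv_normSq_mul_ofReal_sub (z w : ℂ) (hw : w.im ≠ 0) :
    ∫ y : ℝ, (normSq (z * (y - w)))⁻¹ = π / (normSq z * |w.im|) := by
  simp_rw [Complex.normSq_mul, mul_inv]
  rw [integral_const_mul, integral_inv_normSq_ofReal_sub w hw]
  field_simp

theorem integral_inv_quadratic (s q c : ℝ) (hs : 0 < s) (hD : q ^ 2 < 4 * s * c) :
    ∫ t : ℝ, (s * t ^ 2 + q * t + c)⁻¹ = 2 * π / √(4 * s * c - q ^ 2) := by
  set r := √(4 * s * c - q ^ 2)
  have hr0 : 0 < r := Real.sqrt_pos.2 (by linarith)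
  have hr2 : r ^ 2 = 4 * s * c - q ^ 2 := Real.sq_sqrt (by linarith)
  let w : ℂ := ⟨-q / (2 * s), r / (2 * s)⟩
  have hw : 0 < w.im := by positivity
  have hQ : ∀ t : ℝ, s * t ^ 2 + q * t + c = normSq ((√s : ℂ) * (t - w)) := by
    intro t
    rw [Complex.normSq_mul, Complex.normSq_ofReal, Real.mul_self_sqrt hs.le]
    simp only [Complex.normSq_apply, Complex.sub_re, Complex.ofReal_re, Complex.sub_im,
      Complex.ofReal_im, w]
    field_simp
    linear_combination (-1 : ℝ) * hr2
  simp_rw [hQ]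
  rw [integral_inv_normSq_mul_ofReal_sub _ w hw.ne', abs_of_pos hw, Complex.normSq_ofReal,
    Real.mul_self_sqrt hs.le]
  simp only [w]
  field_simp

theorem integral_inv_normSq_mul_ofReal_sub_sub (z d k : ℂ)
    (h : 0 < normSq z * d.im + (k * conj z).im) :
    ∫ y : ℝ, (normSq (z * (y - d) - k))⁻¹ = π / (normSq z * d.im + (k * conj z).im) := by
  have hz : z ≠ 0 := by rintro rfl; simp at h
  have hw : normSq z * (d + k / z).im = normSq z * d.im + (k * conj z).im := by
    rw [div_eq_mul_inv, Complex.inv_def, ← mul_assoc, Complex.add_im, Complex.im_mul_ofReal]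
    field_simp [Complex.normSq_pos.2 hz |>.ne']
  have hw0 : 0 < (d + k / z).im := pos_of_mul_pos_right (hw ▸ h) (Complex.normSq_nonneg z)
  have hfac : ∀ y : ℝ, z * (y - d) - k = z * (y - (d + k / z)) := fun y => by field_simp; ring
  simp_rw [hfac]
  rw [integral_inv_normSq_mul_ofReal_sub z _ hw0.ne', abs_of_pos hw0, hw]

theorem integral_prod_eq_integral_integral_of_nonneg {α β : Type*} [MeasurableSpace α]
    [MeasurableSpace β] {μ : Measure α} {ν : Measure β} [SFinite μ] [SFinite ν]
    {f : α × β → ℝ} (hf : AEStronglyMeasurable f (μ.prod ν)) (hf0 : 0 ≤ f)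
    (hslice : ∀ᵐ x ∂μ, Integrable (fun y => f (x, y)) ν)
    (hint : Integrable (fun x => ∫ y, f (x, y) ∂ν) μ) :
    ∫ z, f z ∂μ.prod ν = ∫ x, ∫ y, f (x, y) ∂ν ∂μ := by
  refine integral_prod f ((integrable_prod_iff hf).2 ⟨hslice, ?_⟩)
  simpa only [Real.norm_of_nonneg (hf0 _)] using hint

theorem integral_fin_two_eq_integral_prod {E : Type*} [NormedAddCommGroup E] [NormedSpace ℝ E]
    (g : ℝ → ℝ → E) : ∫ v : Fin 2 → ℝ, g (v 0) (v 1) = ∫ z : ℝ × ℝ, g z.1 z.2 :=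
  (volume_preserving_piFinTwo fun _ => ℝ).integral_comp (MeasurableEquiv.measurableEmbedding _)
    fun z => g z.1 z.2

theorem integral_inv_normSq_mul_sub_sub (a d k : ℂ) (hd : 0 < d.im)
    (hD : k.im ^ 2 < 4 * (a.im * d.im) * (a.im * d.im + k.re)) :
    ∫ v : Fin 2 → ℝ, (normSq ((v 0 - a) * (v 1 - d) - k))⁻¹
      = 2 * π ^ 2 / √(4 * (a.im * d.im) * (a.im * d.im + k.re) - k.im ^ 2) := by
  set Q : ℝ → ℝ := fun t => d.im * t ^ 2 + k.im * t + (d.im * a.im ^ 2 + k.re * a.im) with hQ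
  have hQD : 4 * d.im * (d.im * a.im ^ 2 + k.re * a.im)
      = 4 * (a.im * d.im) * (a.im * d.im + k.re) := by ring
  have hQpos : ∀ t, 0 < Q t := fun t => by
    nlinarith [sq_nonneg (2 * d.im * t + k.im)]
  have hQ_eq : ∀ x : ℝ, normSq (x - a) * d.im + (k * conj (x - a)).im = Q (x - a.re) := by
    intro x
    simp only [hQ, Complex.normSq_apply, Complex.mul_im, map_sub, Complex.conj_ofReal,
      Complex.sub_re, Complex.sub_im, Complex.ofReal_re, Complex.ofReal_im, Complex.conj_re,
      Complex.conj_im]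
    ring
  have hslice : ∀ x : ℝ, ∫ y : ℝ, (normSq ((x - a) * (y - d) - k))⁻¹ = π / Q (x - a.re) := by
    intro x
    rw [integral_inv_normSq_mul_ofReal_sub_sub _ _ _ (hQ_eq x ▸ hQpos _), hQ_eq]
  have houter : ∫ x : ℝ, π / Q (x - a.re)
      = 2 * π ^ 2 / √(4 * (a.im * d.im) * (a.im * d.im + k.re) - k.im ^ 2) := by
    simp_rw [div_eq_mul_inv π]
    rw [integral_const_mul, integral_sub_right_eq_self (fun t => (Q t)⁻¹),
      integral_inv_quadratic _ _ _ hd (hQD ▸ hD), hQD]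
    ring
  rw [integral_fin_two_eq_integral_prod (fun x y => (normSq ((x - a) * (y - d) - k))⁻¹),
    Measure.volume_eq_prod, integral_prod_eq_integral_integral_of_nonneg]
  · simp_rw [hslice, houter]
  · exact (by fun_prop : Measurable fun z : ℝ × ℝ =>
      (normSq ((z.1 - a) * (z.2 - d) - k))⁻¹).aestronglyMeasurable
  · exact fun z => inv_nonneg.2 (Complex.normSq_nonneg _)
  · refine ae_of_all _ fun x => Integrable.of_integral_ne_zero ?_
    rw [hslice]
    exact (div_pos pi_pos (hQpos _)).ne'
  · refine Integrable.of_integral_ne_zero ?_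
    simp_rw [hslice, houter]
    have : 0 < 4 * (a.im * d.im) * (a.im * d.im + k.re) - k.im ^ 2 := by linarith
    positivity

theorem sq_sub_normSq_sub_conj_le (r : ℝ) (b c : ℂ) (h : normSq (b - conj c) ≤ 4 * r) :
    (2 * (r - normSq (b - conj c) / 4)) ^ 2 ≤ 4 * r * (r + (b * c).re) - (b * c).im ^ 2 := by
  set m := normSq (b - conj c)
  set P := normSq (b + conj c)
  have hre : (b * c).re = (P - m) / 4 := by
    simp only [m, P, Complex.normSq_apply, Complex.mul_re, Complex.sub_re, Complex.sub_im,
      Complex.add_re, Complex.add_im, Complex.conj_re, Complex.conj_im]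
    ring
  have hmP : 4 * (b * c).im ^ 2 ≤ m * P := by
    have : m * P = (normSq b - normSq c) ^ 2 + 4 * (b * c).im ^ 2 := by
      simp only [m, P, Complex.normSq_apply, Complex.mul_im, Complex.sub_re,
        Complex.sub_im, Complex.add_re, Complex.add_im, Complex.conj_re, Complex.conj_im]
      ring
    nlinarith [sq_nonneg (normSq b - normSq c)]
  rw [hre]
  nlinarith [mul_le_mul_of_nonneg_right h (Complex.normSq_nonneg (b - conj c)),
    mul_le_mul_of_nonneg_right h (Complex.normSq_nonneg (b + conj c))]

theorem integral_det_im_inv_two_by_two_le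
    (A : Matrix (Fin 2) (Fin 2) ℂ) (hA : (matIm A).PosDef) :
    (∫ v : Fin 2 → ℝ,
        ((matIm ((Matrix.diagonal (fun i => (v i : ℂ)) - A)⁻¹)).det).re)
      ≤ π ^ 2 := by
  set δ := (A 0 0).im * (A 1 1).im - normSq (A 0 1 - conj (A 1 0)) / 4
  set D := 4 * ((A 0 0).im * (A 1 1).im) * ((A 0 0).im * (A 1 1).im + (A 0 1 * A 1 0).re)
    - (A 0 1 * A 1 0).im ^ 2
  have hδ : 0 < δ := by
    have h := hA.det_pos
    rwa [det_matIm_fin_two, Complex.zero_lt_real] at h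
  have hδD : (2 * δ) ^ 2 ≤ D :=
    sq_sub_normSq_sub_conj_le _ _ _ (by simp only [δ] at hδ; linarith)
  have hD : 0 < √D := Real.sqrt_pos.2 (by nlinarith)
  have hpoint : ∀ v : Fin 2 → ℝ, ((matIm ((diagonal fun i => (v i : ℂ)) - A)⁻¹).det).re
      = δ * (normSq ((v 0 - A 0 0) * (v 1 - A 1 1) - A 0 1 * A 1 0))⁻¹ := by
    intro v
    rw [det_matIm_inv_sub_of_isHermitian (isHermitian_diagonal_of_self_adjoint _ ?_),
      det_matIm_fin_two, Complex.div_ofReal_re, Complex.ofReal_re, det_fin_two, div_eq_mul_inv]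
    · simp [δ]
    · ext i; simp
  calc _ = δ * ∫ v : Fin 2 → ℝ, (normSq ((v 0 - A 0 0) * (v 1 - A 1 1) - A 0 1 * A 1 0))⁻¹ :=
        by simp_rw [hpoint]; exact integral_const_mul _ _
    _ = 2 * δ / √D * π ^ 2 := by
        rw [integral_inv_normSq_mul_sub_sub _ _ _ (im_pos_of_posDef_matIm hA 1) (by nlinarith)]
        ring
    _ ≤ π ^ 2 :=
        mul_le_of_le_one_left (sq_nonneg π) (div_le_one_of_le₀ (le_sqrt_of_sq_le hδD) hD.le)
end

section
/- Let C be an n×n complex matrix. Then Im C is positive definite if and only if C is invertible and Im(−C⁻¹) is positive definite. -/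
open MeasureTheory Matrix Real ComplexOrder

/-! Writing `-C⁻¹ = C⁻ᴴ (-Cᴴ) C⁻¹` gives `Im (-C⁻¹) = C⁻ᴴ (Im C) C⁻¹`, and congruence by an
invertible matrix preserves positive definiteness. Invertibility of `C` is forced by
`Im C > 0`, since `x* (Im C) x = Im (x* C x)` vanishes whenever `C x = 0`. -/

section
variable {m k : Type*}

lemma matIm_neg (C : Matrix m m ℂ) : matIm (-C) = -matIm C := by
  rw [matIm, matIm, conjTranspose_neg, ← smul_neg]
  abel_nf

lemma matIm_conjTranspose (C : Matrix m m ℂ) : matIm Cᴴ = -matIm C := by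
  rw [matIm, matIm, conjTranspose_conjTranspose, ← smul_neg, neg_sub]

variable [Fintype m]

lemma matIm_conjTranspose_mul_mul (B : Matrix m k ℂ) (C : Matrix m m ℂ) :
    matIm (Bᴴ * C * B) = Bᴴ * matIm C * B := by
  simp only [matIm, conjTranspose_mul, conjTranspose_conjTranspose, Matrix.mul_smul,
    Matrix.smul_mul, Matrix.mul_sub, Matrix.sub_mul, Matrix.mul_assoc]

lemma star_dotProduct_matIm_mulVec (C : Matrix m m ℂ) (x : m → ℂ) :
    star x ⬝ᵥ (matIm C *ᵥ x) = (star x ⬝ᵥ (C *ᵥ x)).im := by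
  have hconj : star x ⬝ᵥ (Cᴴ *ᵥ x) = star (star x ⬝ᵥ (C *ᵥ x)) := by
    rw [dotProduct_mulVec, ← star_mulVec, ← star_dotProduct_star, star_star, dotProduct_comm]
  rw [matIm, smul_mulVec, dotProduct_smul, sub_mulVec, dotProduct_sub, hconj, smul_eq_mul,
    Complex.star_def, Complex.sub_conj]
  push_cast
  field_simp

variable [DecidableEq m]

lemma isUnit_of_posDef_matIm {C : Matrix m m ℂ} (h : (matIm C).PosDef) : IsUnit C := by
  rw [isUnit_iff_isUnit_det, isUnit_iff_ne_zero, ne_eq, ← exists_mulVec_eq_zero_iff.not]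
  rintro ⟨x, hx0, hx⟩
  have hpos := h.dotProduct_mulVec_pos hx0
  rw [star_dotProduct_matIm_mulVec, hx, dotProduct_zero, Complex.zero_im,
    Complex.ofReal_zero] at hpos
  exact hpos.false

lemma matIm_neg_inv {C : Matrix m m ℂ} (hC : IsUnit C) :
    matIm (-C⁻¹) = star C⁻¹ * matIm C * C⁻¹ := by
  have hd := (isUnit_iff_isUnit_det C).1 hC
  have hcongr : -C⁻¹ = (C⁻¹)ᴴ * (-Cᴴ) * C⁻¹ := by
    rw [Matrix.mul_neg, Matrix.neg_mul, ← conjTranspose_mul, mul_nonsing_inv C hd,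
      conjTranspose_one, Matrix.one_mul]
  rw [hcongr, matIm_conjTranspose_mul_mul, matIm_neg, matIm_conjTranspose, neg_neg,
    star_eq_conjTranspose]

lemma posDef_matIm_neg_inv_iff {C : Matrix m m ℂ} (hC : IsUnit C) :
    (matIm (-C⁻¹)).PosDef ↔ (matIm C).PosDef := by
  rw [matIm_neg_inv hC, IsUnit.posDef_star_left_conjugate_iff (isUnit_nonsing_inv_iff.2 hC)]

end

theorem posDef_matIm_iff {n : Type*} [Fintype n] [DecidableEq n]
    (C : Matrix n n ℂ) :
    (matIm C).PosDef ↔ IsUnit C ∧ (matIm (-(C⁻¹))).PosDef := by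
  refine ⟨fun h => ?_, fun ⟨hC, h⟩ => (posDef_matIm_neg_inv_iff hC).1 h⟩
  have hC := isUnit_of_posDef_matIm h
  exact ⟨hC, (posDef_matIm_neg_inv_iff hC).2 h⟩
end
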